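/- Let m ≥ 1 and let η₁, …, η_m > 0 with η := Σ_{i=1}^m η_i < 1. Define F : (0, 1) → ℝ by F(t) = Σ_{i=1}^m log₂(η_i/((1−η) t) + 1) + log₂(η/((1−η)(1−t)) + 1). Then F is strictly convex on (0, 1), and any t* ∈ (0, 1) satisfying Σ_{i=1}^m 1/(t*² (1−η)/η_i + t*) = 1/((1−t*)² (1−η)/η + (1−t*)) is the unique global minimizer of F on (0, 1), i.e., F(t) ≥ F(t*) for all t ∈ (0, 1) with equality only at t = t*. -/

import Mathlib

open scoped BigOperators

/-- The function
`F(t) = ∑_{i=1}^m log₂(ηᵢ/((1−η)t) + 1) + log₂(η/((1−η)(1−t)) + 1)`, where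
`η = ∑ᵢ ηᵢ`, arising from a beamsplitter squashing channel of transmissivity `t` for a
pure-loss bosonic broadcast channel with transmission coefficients `η₁,…,η_m`. -/
noncomputable def squashBound {m : ℕ} (η : Fin m → ℝ) (t : ℝ) : ℝ :=
  (∑ i, Real.logb 2 (η i / ((1 - ∑ j, η j) * t) + 1))
    + Real.logb 2 ((∑ j, η j) / ((1 - ∑ j, η j) * (1 - t)) + 1)

/-!
Each summand `t ↦ log₂ (a / (c t) + 1)` (with `a, c > 0`) has derivative
`-1 / ((t² c / a + t) ln 2)`, which increases strictly on `(0, ∞)`; after the reflection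
`t ↦ 1 - t` the last summand has a strictly increasing derivative as well. So `F'` is strictly
increasing on `(0, 1)`, which makes `F` strictly convex, and the stationarity equation says exactly
`F'(t*) = 0`; at a critical point a strictly convex function has its strict global minimum.
-/

open Real Set

theorem StrictConvexOn.lt_of_hasDerivAt_eq_zero {D : Set ℝ} {f : ℝ → ℝ} {x y : ℝ}
    (hf : StrictConvexOn ℝ D f) (hx : x ∈ D) (hy : y ∈ D) (hxy : x ≠ y)
    (hf' : HasDerivAt f 0 x) : f x < f y := by
  rcases hxy.lt_or_gt with hlt | hgt
  · exact (slope_pos_iff_of_le hlt.le).mp (hf.lt_slope_of_hasDerivAt hx hy hlt hf')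
  · exact (slope_neg_iff_of_le hgt.le).mp (hf.slope_lt_of_hasDerivAt hy hx hgt hf')

theorem StrictMonoOn.strictConvexOn_of_hasDerivAt {D : Set ℝ} {f f' : ℝ → ℝ}
    (hD : Convex ℝ D) (hDo : IsOpen D) (hf : ∀ x ∈ D, HasDerivAt f (f' x) x)
    (hf' : StrictMonoOn f' D) : StrictConvexOn ℝ D f := by
  refine StrictMonoOn.strictConvexOn_of_deriv hD
    (fun x hx => (hf x hx).continuousAt.continuousWithinAt) ?_
  rw [hDo.interior_eq]
  exact hf'.congr fun x hx => ((hf x hx).deriv).symm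

/-- Minus the derivative of `t ↦ log (a / (c t) + 1)`, written as in the stationarity equation. -/
noncomputable def squashRate (a c t : ℝ) : ℝ := 1 / (t ^ 2 * c / a + t)

theorem hasDerivAt_logb_div_mul_add_one {a c t : ℝ} (ha : 0 < a) (hc : 0 < c) (ht : 0 < t) :
    HasDerivAt (fun u => logb 2 (a / (c * u) + 1)) (-squashRate a c t / log 2) t := by
  have hct : 0 < c * t := mul_pos hc ht
  have hinner : HasDerivAt (fun u => a / (c * u) + 1) (a * (-c / (c * t) ^ 2)) t := by
    simpa [div_eq_mul_inv] using
      ((((hasDerivAt_id t).const_mul c).inv hct.ne').const_mul a).add_const 1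
  refine ((hinner.log (by positivity)).div_const (log 2)).congr_deriv ?_
  simp only [squashRate]
  field_simp
  ring

theorem squashRate_strictAntiOn {a c : ℝ} (ha : 0 < a) (hc : 0 < c) :
    StrictAntiOn (squashRate a c) (Ioi 0) := by
  intro x hx y hy hxy
  simp only [mem_Ioi] at hx hy
  unfold squashRate
  gcongr

noncomputable def squashBoundDeriv {m : ℕ} (η : Fin m → ℝ) (t : ℝ) : ℝ :=
  (squashRate (∑ j, η j) (1 - ∑ j, η j) (1 - t) - ∑ i, squashRate (η i) (1 - ∑ j, η j) t)
    / log 2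

section squashBound

variable {m : ℕ} {η : Fin m → ℝ}

theorem hasDerivAt_squashBound (hη : ∀ i, 0 < η i) (hS : 0 < ∑ j, η j)
    (hs : 0 < 1 - ∑ j, η j) {t : ℝ} (ht : t ∈ Ioo 0 1) :
    HasDerivAt (squashBound η) (squashBoundDeriv η t) t := by
  have hsum := HasDerivAt.fun_sum (u := Finset.univ)
    fun i _ => hasDerivAt_logb_div_mul_add_one (hη i) hs ht.1
  have hlast := (hasDerivAt_logb_div_mul_add_one hS hs (sub_pos.2 ht.2)).comp t
    ((hasDerivAt_id t).const_sub 1)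
  refine (hsum.add hlast).congr_deriv ?_
  simp only [squashBoundDeriv, neg_div, Finset.sum_neg_distrib, ← Finset.sum_div]
  ring

theorem squashBoundDeriv_strictMonoOn (hη : ∀ i, 0 < η i) (hS : 0 < ∑ j, η j)
    (hs : 0 < 1 - ∑ j, η j) : StrictMonoOn (squashBoundDeriv η) (Ioo 0 1) := by
  intro x hx y hy hxy
  have hlast : squashRate (∑ j, η j) (1 - ∑ j, η j) (1 - x)
      < squashRate (∑ j, η j) (1 - ∑ j, η j) (1 - y) :=
    squashRate_strictAntiOn hS hs (sub_pos.2 hy.2) (sub_pos.2 hx.2) (by linarith)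
  have hsum : ∑ i, squashRate (η i) (1 - ∑ j, η j) y ≤ ∑ i, squashRate (η i) (1 - ∑ j, η j) x :=
    Finset.sum_le_sum fun i _ => (squashRate_strictAntiOn (hη i) hs).antitoneOn hx.1 hy.1 hxy.le
  exact div_lt_div_of_pos_right (by linarith) (log_pos one_lt_two)

end squashBound

/-- Let `m ≥ 1` and `η₁,…,η_m > 0` with `η = ∑ᵢ ηᵢ < 1`.  Then `F` is
strictly convex on `(0,1)`, and any `t* ∈ (0,1)` satisfying the stationarity equation
`∑ᵢ 1/(t*²(1−η)/ηᵢ + t*) = 1/((1−t*)²(1−η)/η + (1−t*))` is the unique global minimizer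
of `F` on `(0,1)`: `F(t) ≥ F(t*)` for all `t ∈ (0,1)`, with equality only at `t = t*`. -/
theorem squashBound_strictConvex_min {m : ℕ} (hm : 1 ≤ m) (η : Fin m → ℝ)
    (hη : ∀ i, 0 < η i) (hsum : (∑ j, η j) < 1) :
    StrictConvexOn ℝ (Set.Ioo (0 : ℝ) 1) (squashBound η)
    ∧ ∀ t₀ ∈ Set.Ioo (0 : ℝ) 1,
        (∑ i, 1 / (t₀ ^ 2 * (1 - ∑ j, η j) / η i + t₀))
            = 1 / ((1 - t₀) ^ 2 * (1 - ∑ j, η j) / (∑ j, η j) + (1 - t₀)) →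
        ∀ t ∈ Set.Ioo (0 : ℝ) 1,
          squashBound η t₀ ≤ squashBound η t
          ∧ (squashBound η t = squashBound η t₀ → t = t₀) := by
  have hS : 0 < ∑ j, η j := Finset.sum_pos (fun i _ => hη i) ⟨⟨0, hm⟩, Finset.mem_univ _⟩
  have hs : 0 < 1 - ∑ j, η j := sub_pos.2 hsum
  have hderiv := fun t (ht : t ∈ Ioo (0 : ℝ) 1) => hasDerivAt_squashBound hη hS hs ht
  have hconvex : StrictConvexOn ℝ (Ioo 0 1) (squashBound η) :=
    (squashBoundDeriv_strictMonoOn hη hS hs).strictConvexOn_of_hasDerivAt (convex_Ioo 0 1)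
      isOpen_Ioo hderiv
  refine ⟨hconvex, fun t₀ ht₀ hstat t ht => ?_⟩
  have hcrit : HasDerivAt (squashBound η) 0 t₀ := by
    convert hderiv t₀ ht₀
    simp only [squashBoundDeriv, squashRate, hstat, sub_self, zero_div]
  have hlt : t ≠ t₀ → squashBound η t₀ < squashBound η t := fun hne =>
    hconvex.lt_of_hasDerivAt_eq_zero ht₀ ht (Ne.symm hne) hcrit
  refine ⟨?_, fun heq => by_contra fun hne => (hlt hne).ne' heq⟩
  rcases eq_or_ne t t₀ with rfl | hne
  · exact le_rfl
  · exact (hlt hne).le
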